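/- arXiv:2210.09120 — 2 statements merged into one kernel-verified Lean document; each statement's English description precedes it below -/
import Mathlib

section
/- Let d ≥ 7 be an integer and set λ = (−d + 6 + √(d² + 4d − 28))/2. For i = 1, 2 let ũ_i, h̃_i ∈ C²((0,∞)) solve the system ũ″ + ((d−5)/r)ũ′ + (2(d−4)/r²)(ũh̃ − ũ) − r²ũ = 0 and h̃″ + ((d−5)/r)h̃′ + (2(d−4)/r²)(ũ² − h̃) = 0 on (0,∞). Assume ũ_i(r) > 0 for all r > 0, that there exist c_i ∈ ℝ and constants C_i, r_i > 0 with |ũ_i(r) − 1 + c_i·r^λ| ≤ C_i r⁴ and |h̃_i(r) − 1 − 2c_i·r^λ| ≤ C_i r⁴ for 0 < r < r_i, and that ∫₁^∞ ũ_i(r)² r^{d−5} dr < ∞. Then c₁ = c₂. -/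
open Set MeasureTheory Filter



private lemma SNH_tendsto (p : ℝ) (hp : 1 < p) (b : ℝ) (hb : 0 < b) :
    Tendsto (fun x : ℝ => ∫ s in x..b, s ^ (-p)) (nhdsWithin 0 (Ioi 0)) atTop := by
  have h2 : Tendsto (fun x : ℝ => (x⁻¹) ^ (p - 1)) (nhdsWithin 0 (Ioi 0)) atTop :=
    (tendsto_rpow_atTop (by linarith)).comp tendsto_inv_nhdsGT_zero
  have h1 : Tendsto (fun x : ℝ => x ^ (1 - p)) (nhdsWithin 0 (Ioi 0)) atTop := by
    refine h2.congr' ?_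
    filter_upwards [self_mem_nhdsWithin] with x hx
    have hx0 : (0:ℝ) < x := hx
    rw [Real.inv_rpow hx0.le, ← Real.rpow_neg hx0.le]
    norm_num
  have h3 : Tendsto (fun x : ℝ => (x ^ (1-p) - b ^ (1-p)) / (p - 1)) (nhdsWithin 0 (Ioi 0)) atTop := by
    have := (tendsto_atTop_add_const_right (nhdsWithin (0:ℝ) (Ioi 0)) (-(b ^ (1-p))) h1).atTop_div_const (show (0:ℝ) < p - 1 by linarith)
    simpa [sub_eq_add_neg] using this
  refine h3.congr' ?_
  filter_upwards [self_mem_nhdsWithin] with x hx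
  have hx0 : (0:ℝ) < x := hx
  have hnm : (0:ℝ) ∉ uIcc x b := notMem_uIcc_of_lt hx0 hb
  rw [integral_rpow (Or.inr ⟨by intro h; rw [neg_eq_iff_eq_neg] at h; linarith, hnm⟩)]
  rw [show -p + 1 = 1 - p by ring,
    div_eq_div_iff (ne_of_gt (show (0:ℝ) < p - 1 by linarith)) (ne_of_lt (show 1 - p < (0:ℝ) by linarith))]
  ring

private lemma SNH_no_bad (a : ℝ) (ha : 1 < a) (G G' : ℝ → ℝ) (b : ℝ) (hb : 0 < b)
    (η : ℝ) (hη : 0 < η) (K : ℝ)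
    (hder : ∀ s ∈ Ioc (0:ℝ) b, HasDerivAt G (G' s) s)
    (hcont : ContinuousOn G' (Ioc 0 b))
    (hlow : ∀ s ∈ Ioc (0:ℝ) b, η * s ^ (-a) ≤ G' s)
    (hK : ∀ s ∈ Ioc (0:ℝ) b, -K ≤ G s) : False := by
  have htend := SNH_tendsto a ha b hb
  have hev : ∀ᶠ x in nhdsWithin 0 (Ioi 0), ((G b + K + 1)/η ≤ ∫ s in x..b, s ^ (-a)) :=
    htend.eventually_ge_atTop _
  have hev2 : ∀ᶠ x in nhdsWithin (0:ℝ) (Ioi 0), x ∈ Ioo (0:ℝ) b :=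
    Filter.eventually_of_mem (Ioo_mem_nhdsGT_of_mem ⟨le_refl 0, hb⟩) (fun x hx => hx)
  obtain ⟨x, hint, hx0, hxb⟩ := (hev.and hev2).exists
  have hsub : Icc x b ⊆ Ioc 0 b := fun s hs => ⟨lt_of_lt_of_le hx0 hs.1, hs.2⟩
  have husub : uIcc x b = Icc x b := uIcc_of_le hxb.le
  have hii : IntervalIntegrable G' volume x b := by
    apply ContinuousOn.intervalIntegrable
    rw [husub]; exact hcont.mono hsub
  have hpow_cont : ContinuousOn (fun s : ℝ => η * s ^ (-a)) (Icc x b) :=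
    continuousOn_const.mul (fun s hs =>
      (Real.continuousAt_rpow_const s (-a) (Or.inl (ne_of_gt (lt_of_lt_of_le hx0 hs.1)))).continuousWithinAt)
  have hii2 : IntervalIntegrable (fun s : ℝ => η * s ^ (-a)) volume x b := by
    apply ContinuousOn.intervalIntegrable; rw [husub]; exact hpow_cont
  have hFTC : ∫ s in x..b, G' s = G b - G x :=
    intervalIntegral.integral_eq_sub_of_hasDerivAt
      (fun s hs => hder s (hsub (husub ▸ hs))) hii
  have hmono : ∫ s in x..b, η * s ^ (-a) ≤ ∫ s in x..b, G' s :=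
    intervalIntegral.integral_mono_on hxb.le hii2 hii (fun s hs => hlow s (hsub hs))
  have hci : ∫ s in x..b, η * s ^ (-a) = η * ∫ s in x..b, s ^ (-a) :=
    intervalIntegral.integral_const_mul _ _
  have hKx : -K ≤ G x := hK x ⟨hx0, hxb.le⟩
  have hmul : G b + K + 1 ≤ (∫ s in x..b, s ^ (-a)) * η := (div_le_iff₀ hη).1 hint
  nlinarith [hmul, hFTC, hmono, hci, hKx]

private lemma SNH_hasDerivAt_mu (d : ℕ) (hd : 7 ≤ d) (u₁ u₂ h₁ h₂ : ℝ → ℝ)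
    (hu₁1 : ∀ r ∈ Ioi (0:ℝ), DifferentiableAt ℝ u₁ r)
    (hu₁2 : ∀ r ∈ Ioi (0:ℝ), DifferentiableAt ℝ (deriv u₁) r)
    (hu₂1 : ∀ r ∈ Ioi (0:ℝ), DifferentiableAt ℝ u₂ r)
    (hu₂2 : ∀ r ∈ Ioi (0:ℝ), DifferentiableAt ℝ (deriv u₂) r)
    (hequ₁ : ∀ r : ℝ, 0 < r →
      deriv (deriv u₁) r + ((d:ℝ) - 5) / r * deriv u₁ r
        + 2 * ((d:ℝ) - 4) / r^2 * (u₁ r * h₁ r - u₁ r) - r^2 * u₁ r = 0)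
    (hequ₂ : ∀ r : ℝ, 0 < r →
      deriv (deriv u₂) r + ((d:ℝ) - 5) / r * deriv u₂ r
        + 2 * ((d:ℝ) - 4) / r^2 * (u₂ r * h₂ r - u₂ r) - r^2 * u₂ r = 0)
    (r : ℝ) (hr : 0 < r) :
    HasDerivAt (fun s => s ^ ((d:ℝ) - 5) * (deriv u₁ s * u₂ s - u₁ s * deriv u₂ s))
      (2 * ((d:ℝ) - 4) * r ^ ((d:ℝ) - 7) * (u₁ r * u₂ r * (h₂ r - h₁ r))) r := by
  have hrne : r ≠ 0 := hr.ne'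
  have hm : r ∈ Ioi (0:ℝ) := hr
  have hu1 : HasDerivAt u₁ (deriv u₁ r) r := (hu₁1 r hm).hasDerivAt
  have hu2 : HasDerivAt u₂ (deriv u₂ r) r := (hu₂1 r hm).hasDerivAt
  have hdu1 : HasDerivAt (deriv u₁) (deriv (deriv u₁) r) r := (hu₁2 r hm).hasDerivAt
  have hdu2 : HasDerivAt (deriv u₂) (deriv (deriv u₂) r) r := (hu₂2 r hm).hasDerivAt
  have hW : HasDerivAt (fun s => deriv u₁ s * u₂ s - u₁ s * deriv u₂ s)
      (deriv (deriv u₁) r * u₂ r - u₁ r * deriv (deriv u₂) r) r := by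
    have h := (hdu1.mul hu2).sub (hu1.mul hdu2)
    exact h.congr_deriv (by ring)
  have hp : HasDerivAt (fun s : ℝ => s ^ ((d:ℝ)-5)) (((d:ℝ)-5) * r ^ ((d:ℝ)-5-1)) r :=
    Real.hasDerivAt_rpow_const (Or.inl hrne)
  have h := hp.mul hW
  refine h.congr_deriv ?_
  have e1 : deriv (deriv u₁) r = r^2 * u₁ r - ((d:ℝ)-5)/r * deriv u₁ r
      - 2*((d:ℝ)-4)/r^2 * (u₁ r * h₁ r - u₁ r) := by have := hequ₁ r hr; linarith
  have e2 : deriv (deriv u₂) r = r^2 * u₂ r - ((d:ℝ)-5)/r * deriv u₂ r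
      - 2*((d:ℝ)-4)/r^2 * (u₂ r * h₂ r - u₂ r) := by have := hequ₂ r hr; linarith
  have p1 : r ^ ((d:ℝ)-5) = r ^ ((d:ℝ)-7) * (r*r) := by
    rw [show ((d:ℝ)-5) = ((d:ℝ)-7)+1+1 by ring, Real.rpow_add hr, Real.rpow_add hr,
      Real.rpow_one]
    ring
  have p2 : r ^ ((d:ℝ)-5-1) = r ^ ((d:ℝ)-7) * r := by
    rw [show ((d:ℝ)-5-1) = ((d:ℝ)-7)+1 by ring, Real.rpow_add hr, Real.rpow_one]
  rw [e1, e2, p1, p2]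
  field_simp
  ring

private lemma SNH_hasDerivAt_g (d : ℕ) (hd : 7 ≤ d) (u₁ u₂ h₁ h₂ : ℝ → ℝ)
    (hh₁1 : ∀ r ∈ Ioi (0:ℝ), DifferentiableAt ℝ h₁ r)
    (hh₁2 : ∀ r ∈ Ioi (0:ℝ), DifferentiableAt ℝ (deriv h₁) r)
    (hh₂1 : ∀ r ∈ Ioi (0:ℝ), DifferentiableAt ℝ h₂ r)
    (hh₂2 : ∀ r ∈ Ioi (0:ℝ), DifferentiableAt ℝ (deriv h₂) r)
    (heqh₁ : ∀ r : ℝ, 0 < r →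
      deriv (deriv h₁) r + ((d:ℝ) - 5) / r * deriv h₁ r
        + 2 * ((d:ℝ) - 4) / r^2 * ((u₁ r)^2 - h₁ r) = 0)
    (heqh₂ : ∀ r : ℝ, 0 < r →
      deriv (deriv h₂) r + ((d:ℝ) - 5) / r * deriv h₂ r
        + 2 * ((d:ℝ) - 4) / r^2 * ((u₂ r)^2 - h₂ r) = 0)
    (r : ℝ) (hr : 0 < r) :
    HasDerivAt (fun s => s ^ ((d:ℝ) - 5) * (deriv h₂ s - deriv h₁ s))
      (2 * ((d:ℝ) - 4) * r ^ ((d:ℝ) - 7) *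
        ((u₁ r)^2 - (u₂ r)^2 + (h₂ r - h₁ r))) r := by
  have hrne : r ≠ 0 := hr.ne'
  have hm : r ∈ Ioi (0:ℝ) := hr
  have hdh1 : HasDerivAt (deriv h₁) (deriv (deriv h₁) r) r := (hh₁2 r hm).hasDerivAt
  have hdh2 : HasDerivAt (deriv h₂) (deriv (deriv h₂) r) r := (hh₂2 r hm).hasDerivAt
  have hW : HasDerivAt (fun s => deriv h₂ s - deriv h₁ s)
      (deriv (deriv h₂) r - deriv (deriv h₁) r) r := hdh2.sub hdh1
  have hp : HasDerivAt (fun s : ℝ => s ^ ((d:ℝ)-5)) (((d:ℝ)-5) * r ^ ((d:ℝ)-5-1)) r :=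
    Real.hasDerivAt_rpow_const (Or.inl hrne)
  have h := hp.mul hW
  refine h.congr_deriv ?_
  have e1 : deriv (deriv h₁) r = - (((d:ℝ)-5)/r) * deriv h₁ r
      - 2*((d:ℝ)-4)/r^2 * ((u₁ r)^2 - h₁ r) := by have := heqh₁ r hr; linarith
  have e2 : deriv (deriv h₂) r = - (((d:ℝ)-5)/r) * deriv h₂ r
      - 2*((d:ℝ)-4)/r^2 * ((u₂ r)^2 - h₂ r) := by have := heqh₂ r hr; linarith
  have p1 : r ^ ((d:ℝ)-5) = r ^ ((d:ℝ)-7) * (r*r) := by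
    rw [show ((d:ℝ)-5) = ((d:ℝ)-7)+1+1 by ring, Real.rpow_add hr, Real.rpow_add hr,
      Real.rpow_one]
    ring
  have p2 : r ^ ((d:ℝ)-5-1) = r ^ ((d:ℝ)-7) * r := by
    rw [show ((d:ℝ)-5-1) = ((d:ℝ)-7)+1 by ring, Real.rpow_add hr, Real.rpow_one]
  rw [e1, e2, p1, p2]
  field_simp
  ring

private lemma SNH_amgm (z : ℝ) (hz : 0 < z) : 2 ≤ z + z⁻¹ := by
  have h5 : z^2 * z⁻¹ = z := by field_simp
  nlinarith [mul_nonneg (sq_nonneg (z-1)) (inv_nonneg.2 hz.le), h5,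
    mul_inv_cancel₀ (ne_of_gt hz)]

private lemma SNH_step (A B C R1 : ℝ) (hsum : 2*R1 ≤ A + B) (h2 : A ≤ C) (ht1 : C = R1) :
    R1 ≤ B := by linarith

set_option maxHeartbeats 2000000 in
private lemma SNH_key (d : ℕ) (hd : 7 ≤ d) (lam : ℝ)
    (hlam : lam = (-(d:ℝ) + 6 + Real.sqrt ((d:ℝ)^2 + 4*(d:ℝ) - 28)) / 2)
    (u₁ u₂ h₁ h₂ : ℝ → ℝ)
    (hu₁1 : ∀ r ∈ Ioi (0:ℝ), DifferentiableAt ℝ u₁ r)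
    (hu₁2 : ∀ r ∈ Ioi (0:ℝ), DifferentiableAt ℝ (deriv u₁) r)
    (hh₁1 : ∀ r ∈ Ioi (0:ℝ), DifferentiableAt ℝ h₁ r)
    (hh₁2 : ∀ r ∈ Ioi (0:ℝ), DifferentiableAt ℝ (deriv h₁) r)
    (hu₂1 : ∀ r ∈ Ioi (0:ℝ), DifferentiableAt ℝ u₂ r)
    (hu₂2 : ∀ r ∈ Ioi (0:ℝ), DifferentiableAt ℝ (deriv u₂) r)
    (hh₂1 : ∀ r ∈ Ioi (0:ℝ), DifferentiableAt ℝ h₂ r)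
    (hh₂2 : ∀ r ∈ Ioi (0:ℝ), DifferentiableAt ℝ (deriv h₂) r)
    (hequ₁ : ∀ r : ℝ, 0 < r →
      deriv (deriv u₁) r + ((d:ℝ) - 5) / r * deriv u₁ r
        + 2 * ((d:ℝ) - 4) / r^2 * (u₁ r * h₁ r - u₁ r) - r^2 * u₁ r = 0)
    (heqh₁ : ∀ r : ℝ, 0 < r →
      deriv (deriv h₁) r + ((d:ℝ) - 5) / r * deriv h₁ r
        + 2 * ((d:ℝ) - 4) / r^2 * ((u₁ r)^2 - h₁ r) = 0)
    (hequ₂ : ∀ r : ℝ, 0 < r →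
      deriv (deriv u₂) r + ((d:ℝ) - 5) / r * deriv u₂ r
        + 2 * ((d:ℝ) - 4) / r^2 * (u₂ r * h₂ r - u₂ r) - r^2 * u₂ r = 0)
    (heqh₂ : ∀ r : ℝ, 0 < r →
      deriv (deriv h₂) r + ((d:ℝ) - 5) / r * deriv h₂ r
        + 2 * ((d:ℝ) - 4) / r^2 * ((u₂ r)^2 - h₂ r) = 0)
    (hpos₁ : ∀ r : ℝ, 0 < r → 0 < u₁ r) (hpos₂ : ∀ r : ℝ, 0 < r → 0 < u₂ r)
    (c₁ c₂ C₁ C₂ r₁ r₂ : ℝ) (hC₁ : 0 < C₁) (hC₂ : 0 < C₂) (hr₁ : 0 < r₁) (hr₂ : 0 < r₂)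
    (hasym₁ : ∀ r : ℝ, 0 < r → r < r₁ →
      |u₁ r - 1 + c₁ * r ^ lam| ≤ C₁ * r ^ 4 ∧ |h₁ r - 1 - 2 * c₁ * r ^ lam| ≤ C₁ * r ^ 4)
    (hasym₂ : ∀ r : ℝ, 0 < r → r < r₂ →
      |u₂ r - 1 + c₂ * r ^ lam| ≤ C₂ * r ^ 4 ∧ |h₂ r - 1 - 2 * c₂ * r ^ lam| ≤ C₂ * r ^ 4)
    (hint₂ : IntegrableOn (fun r : ℝ => (u₂ r)^2 * r^(d-5)) (Ioi 1)) :
    c₁ ≤ c₂ := by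
  by_contra hcc
  push_neg at hcc
  -- basic facts
  have hd7 : (7:ℝ) ≤ (d:ℝ) := by exact_mod_cast hd
  have hlam0 : 0 < lam := by
    have h6 : (0:ℝ) ≤ (d:ℝ) - 6 := by linarith
    have h : (d:ℝ) - 6 < Real.sqrt ((d:ℝ)^2 + 4*(d:ℝ) - 28) :=
      (Real.lt_sqrt h6).2 (by nlinarith)
    rw [hlam]; linarith
  have hlam4 : lam < 4 := by
    have h : Real.sqrt ((d:ℝ)^2 + 4*(d:ℝ) - 28) < (d:ℝ) + 2 :=
      (Real.sqrt_lt' (by linarith)).2 (by nlinarith)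
    rw [hlam]; linarith
  -- continuity bundles
  have cu₁ : ContinuousOn u₁ (Ioi 0) := fun s hs => ((hu₁1 s hs).continuousAt).continuousWithinAt
  have cu₂ : ContinuousOn u₂ (Ioi 0) := fun s hs => ((hu₂1 s hs).continuousAt).continuousWithinAt
  have ch₁ : ContinuousOn h₁ (Ioi 0) := fun s hs => ((hh₁1 s hs).continuousAt).continuousWithinAt
  have ch₂ : ContinuousOn h₂ (Ioi 0) := fun s hs => ((hh₂1 s hs).continuousAt).continuousWithinAt
  have cdu₁ : ContinuousOn (deriv u₁) (Ioi 0) := fun s hs => ((hu₁2 s hs).continuousAt).continuousWithinAt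
  have cdu₂ : ContinuousOn (deriv u₂) (Ioi 0) := fun s hs => ((hu₂2 s hs).continuousAt).continuousWithinAt
  have cdh₁ : ContinuousOn (deriv h₁) (Ioi 0) := fun s hs => ((hh₁2 s hs).continuousAt).continuousWithinAt
  have cdh₂ : ContinuousOn (deriv h₂) (Ioi 0) := fun s hs => ((hh₂2 s hs).continuousAt).continuousWithinAt
  have crpow : ∀ c : ℝ, ContinuousOn (fun s : ℝ => s ^ c) (Ioi 0) := fun c s hs =>
    (Real.continuousAt_rpow_const s c (Or.inl (ne_of_gt hs))).continuousWithinAt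
  -- the key functions
  set δf : ℝ → ℝ := fun s => h₂ s - h₁ s with hδf
  set Wf : ℝ → ℝ := fun s => deriv u₁ s * u₂ s - u₁ s * deriv u₂ s with hWf
  set μf : ℝ → ℝ := fun s => s ^ ((d:ℝ)-5) * Wf s with hμf
  set gf : ℝ → ℝ := fun s => s ^ ((d:ℝ)-5) * (deriv h₂ s - deriv h₁ s) with hgf
  set ρf : ℝ → ℝ := fun s => u₁ s / u₂ s with hρf
  -- derivatives
  have hμder : ∀ s : ℝ, 0 < s →
      HasDerivAt μf (2*((d:ℝ)-4) * s ^ ((d:ℝ)-7) * (u₁ s * u₂ s * δf s)) s := by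
    intro s hs
    simp only [hμf, hWf, hδf]
    exact SNH_hasDerivAt_mu d hd u₁ u₂ h₁ h₂ hu₁1 hu₁2 hu₂1 hu₂2 hequ₁ hequ₂ s hs
  have hgder : ∀ s : ℝ, 0 < s →
      HasDerivAt gf (2*((d:ℝ)-4) * s ^ ((d:ℝ)-7) * ((u₁ s)^2 - (u₂ s)^2 + δf s)) s := by
    intro s hs
    simp only [hgf, hδf]
    exact SNH_hasDerivAt_g d hd u₁ u₂ h₁ h₂ hh₁1 hh₁2 hh₂1 hh₂2 heqh₁ heqh₂ s hs
  have hρder : ∀ s : ℝ, 0 < s → HasDerivAt ρf (Wf s / (u₂ s)^2) s := by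
    intro s hs
    simp only [hρf, hWf]
    exact (hu₁1 s hs).hasDerivAt.div (hu₂1 s hs).hasDerivAt (ne_of_gt (hpos₂ s hs))
  have hδder : ∀ s : ℝ, 0 < s → HasDerivAt δf (deriv h₂ s - deriv h₁ s) s := by
    intro s hs
    simp only [hδf]
    exact (hh₂1 s hs).hasDerivAt.sub (hh₁1 s hs).hasDerivAt
  -- continuity of the key functions
  have cW : ContinuousOn Wf (Ioi 0) := by
    rw [hWf]; exact (cdu₁.mul cu₂).sub (cu₁.mul cdu₂)
  have cμ : ContinuousOn μf (Ioi 0) := by rw [hμf]; exact (crpow _).mul cW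
  have cg : ContinuousOn gf (Ioi 0) := by rw [hgf]; exact (crpow _).mul (cdh₂.sub cdh₁)
  have cρ' : ContinuousOn (fun s => Wf s / (u₂ s)^2) (Ioi 0) :=
    cW.div (cu₂.pow 2) (fun s hs => pow_ne_zero 2 (ne_of_gt (hpos₂ s hs)))
  have cρ : ContinuousOn ρf (Ioi 0) := by
    rw [hρf]; exact cu₁.div cu₂ (fun s hs => ne_of_gt (hpos₂ s hs))
  have cδ : ContinuousOn δf (Ioi 0) := by rw [hδf]; exact ch₂.sub ch₁
  -- small radius
  set e := c₁ - c₂ with hee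
  have he0 : 0 < e := sub_pos.2 hcc
  have hCC : 0 < C₁ + C₂ := by linarith
  set θ₁ := (e/(2*(C₁+C₂))) ^ ((4-lam)⁻¹) with hθ₁def
  set θ₂ := ((2*(|c₂|+C₂+1))⁻¹) ^ (lam⁻¹) with hθ₂def
  have hθ₁0 : 0 < θ₁ := Real.rpow_pos_of_pos (by positivity) _
  have hθ₂0 : 0 < θ₂ := Real.rpow_pos_of_pos (by positivity) _
  set ε := min (min r₁ r₂) (min 1 (min θ₁ θ₂)) with hεdef
  have hε0 : 0 < ε := lt_min (lt_min hr₁ hr₂) (lt_min one_pos (lt_min hθ₁0 hθ₂0))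
  have hεr₁ : ε ≤ r₁ := le_trans (min_le_left _ _) (min_le_left _ _)
  have hεr₂ : ε ≤ r₂ := le_trans (min_le_left _ _) (min_le_right _ _)
  have hε1 : ε ≤ 1 := le_trans (min_le_right _ _) (min_le_left _ _)
  have hεθ₁ : ε ≤ θ₁ := le_trans (min_le_right _ _) (le_trans (min_le_right _ _) (min_le_left _ _))
  have hεθ₂ : ε ≤ θ₂ := le_trans (min_le_right _ _) (le_trans (min_le_right _ _) (min_le_right _ _))
  set K := 2*|c₁| + 2*|c₂| + C₁ + C₂ with hKdef
  have habs : ∀ (c : ℝ) (r : ℝ), 0 < r → r < 1 → |c * r ^ lam| ≤ |c| := by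
    intro c r hr hr1
    rw [abs_mul, abs_of_nonneg (Real.rpow_nonneg hr.le lam)]
    nlinarith [Real.rpow_le_one hr.le hr1.le hlam0.le, abs_nonneg c,
      Real.rpow_nonneg hr.le lam]
  -- near-zero behaviour
  have hnear : ∀ r : ℝ, 0 < r → r < ε →
      δf r < 0 ∧ u₁ r < u₂ r ∧ u₂ r ≤ 2 ∧ -K ≤ δf r := by
    intro r hr hrε
    have hr1 : r < 1 := lt_of_lt_of_le hrε hε1
    obtain ⟨ha1u, ha1h⟩ := hasym₁ r hr (lt_of_lt_of_le hrε hεr₁)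
    obtain ⟨ha2u, ha2h⟩ := hasym₂ r hr (lt_of_lt_of_le hrε hεr₂)
    rw [abs_le] at ha1u ha1h ha2u ha2h
    have hrl0 : 0 < r ^ lam := Real.rpow_pos_of_pos hr lam
    have hrl1 : r ^ lam ≤ 1 := Real.rpow_le_one hr.le hr1.le hlam0.le
    have h4lam : r ^ (4:ℕ) ≤ r ^ lam := by
      have h := Real.rpow_le_rpow_of_exponent_ge hr hr1.le hlam4.le
      rwa [show ((4:ℝ)) = ((4:ℕ):ℝ) by norm_num, Real.rpow_natCast] at h
    have hsm1 : (C₁ + C₂) * r ^ (4:ℕ) ≤ e/2 * r ^ lam := by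
      have hsplit : (r : ℝ) ^ (4:ℕ) = r ^ lam * r ^ (4 - lam) := by
        rw [← Real.rpow_natCast r 4, ← Real.rpow_add hr]; norm_num
      have hθle : r ^ (4 - lam) ≤ e / (2*(C₁+C₂)) := by
        have h1 : r ^ (4-lam) ≤ θ₁ ^ (4-lam) :=
          Real.rpow_le_rpow hr.le (le_of_lt (lt_of_lt_of_le hrε hεθ₁)) (by linarith)
        have h2 : θ₁ ^ (4-lam) = e / (2*(C₁+C₂)) := by
          rw [hθ₁def, ← Real.rpow_mul (by positivity),
            inv_mul_cancel₀ (ne_of_gt (by linarith : (0:ℝ) < 4 - lam)), Real.rpow_one]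
        linarith
      calc (C₁+C₂) * r ^ (4:ℕ) = (C₁+C₂) * (r ^ lam * r ^ (4-lam)) := by rw [hsplit]
        _ ≤ (C₁+C₂) * (r ^ lam * (e/(2*(C₁+C₂)))) :=
            mul_le_mul_of_nonneg_left (mul_le_mul_of_nonneg_left hθle hrl0.le) hCC.le
        _ = e/2 * r ^ lam := by field_simp
    have hsm2 : (|c₂| + C₂) * r ^ lam ≤ 1/2 := by
      have h1 : r ^ lam ≤ θ₂ ^ lam :=
        Real.rpow_le_rpow hr.le (le_of_lt (lt_of_lt_of_le hrε hεθ₂)) hlam0.le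
      have h2 : θ₂ ^ lam = (2*(|c₂|+C₂+1))⁻¹ := by
        rw [hθ₂def, ← Real.rpow_mul (by positivity),
          inv_mul_cancel₀ (ne_of_gt hlam0), Real.rpow_one]
      have h3 : (0:ℝ) ≤ |c₂| + C₂ := by positivity
      have h4 : (|c₂|+C₂) * r ^ lam ≤ (|c₂|+C₂) * (2*(|c₂|+C₂+1))⁻¹ :=
        mul_le_mul_of_nonneg_left (le_trans h1 (le_of_eq h2)) h3
      have h5 : (|c₂|+C₂) * (2*(|c₂|+C₂+1))⁻¹ ≤ 1/2 := by
        rw [← div_eq_mul_inv, div_le_iff₀ (by positivity)]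
        linarith [abs_nonneg c₂]
      linarith
    have hE : e * r ^ lam = c₁ * r ^ lam - c₂ * r ^ lam := by rw [hee]; ring
    have hb1 := abs_le.1 (habs c₁ r hr hr1)
    have hb2 := abs_le.1 (habs c₂ r hr hr1)
    have hepos : 0 < e * r ^ lam := mul_pos he0 hrl0
    refine ⟨?_, ?_, ?_, ?_⟩
    · show h₂ r - h₁ r < 0
      nlinarith [ha2h.2, ha1h.1, hsm1, hepos, hE]
    · nlinarith [ha1u.2, ha2u.1, hsm1, hepos, hE]
    · -- u₂ r ≤ 2
      have hc2r : -(c₂ * r ^ lam) ≤ |c₂| * r ^ lam := by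
        nlinarith [neg_abs_le c₂, hrl0.le, abs_nonneg c₂]
      nlinarith [ha2u.2, hsm2, h4lam, hC₂.le, hrl0]
    · show -K ≤ h₂ r - h₁ r
      rw [hKdef]
      nlinarith [ha2h.1, ha1h.2, hb1.2, hb2.1, h4lam, hrl1, hC₁.le, hC₂.le]
  -- sub-lemma: gf is negative wherever the ordering holds below
  have subg : ∀ rh : ℝ, 0 < rh → (∀ s : ℝ, 0 < s → s < rh → δf s < 0 ∧ u₁ s < u₂ s) →
      gf rh < 0 := by
    intro rh hrh hP
    by_contra hge0
    push_neg at hge0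
    have hanti : StrictAntiOn gf (Ioc 0 rh) := by
      apply strictAntiOn_of_deriv_neg (convex_Ioc 0 rh) (cg.mono Ioc_subset_Ioi_self)
      intro s hs
      rw [interior_Ioc] at hs
      rw [(hgder s hs.1).deriv]
      obtain ⟨hδs, hus⟩ := hP s hs.1 hs.2
      have ht : 0 < s ^ ((d:ℝ)-7) := Real.rpow_pos_of_pos hs.1 _
      have h1 := hpos₁ s hs.1
      have h2 : (u₁ s)^2 < (u₂ s)^2 := by nlinarith
      have h3 : (u₁ s)^2 - (u₂ s)^2 + δf s < 0 := by linarith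
      have h4 : 0 < 2*((d:ℝ)-4) := by linarith
      exact mul_neg_of_pos_of_neg (mul_pos h4 ht) h3
    set b := min rh ε / 2 with hbdef
    have hminpos : 0 < min rh ε := lt_min hrh hε0
    have hb0 : 0 < b := by rw [hbdef]; positivity
    have hbrh : b < rh := by
      rw [hbdef]
      calc min rh ε / 2 < min rh ε := half_lt_self hminpos
        _ ≤ rh := min_le_left _ _
    have hbε : b < ε := by
      rw [hbdef]
      calc min rh ε / 2 < min rh ε := half_lt_self hminpos
        _ ≤ ε := min_le_right _ _
    have hη : 0 < gf b :=
      lt_of_le_of_lt hge0 (hanti ⟨hb0, hbrh.le⟩ ⟨hrh, le_refl rh⟩ hbrh)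
    refine SNH_no_bad ((d:ℝ)-5) (by linarith) δf (fun s => deriv h₂ s - deriv h₁ s)
      b hb0 (gf b) hη K ?_ ?_ ?_ ?_
    · intro s hs; exact hδder s hs.1
    · exact (cdh₂.sub cdh₁).mono Ioc_subset_Ioi_self
    · intro s hs
      show gf b * s ^ (-((d:ℝ)-5)) ≤ deriv h₂ s - deriv h₁ s
      have hgs : gf b ≤ gf s := by
        rcases eq_or_lt_of_le hs.2 with h|h
        · exact le_of_eq (by rw [h])
        · exact (hanti ⟨hs.1, le_of_lt (lt_trans h hbrh)⟩ ⟨hb0, hbrh.le⟩ h).le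
      have hsp : 0 < s ^ (-((d:ℝ)-5)) := Real.rpow_pos_of_pos hs.1 _
      have hid : deriv h₂ s - deriv h₁ s = s ^ (-((d:ℝ)-5)) * gf s := by
        rw [hgf]
        dsimp only
        rw [← mul_assoc, ← Real.rpow_add hs.1,
          show -((d:ℝ)-5) + ((d:ℝ)-5) = 0 by ring, Real.rpow_zero, one_mul]
      rw [hid]
      calc gf b * s ^ (-((d:ℝ)-5)) = s ^ (-((d:ℝ)-5)) * gf b := by ring
        _ ≤ s ^ (-((d:ℝ)-5)) * gf s := mul_le_mul_of_nonneg_left hgs hsp.le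
    · intro s hs
      exact (hnear s hs.1 (lt_of_le_of_lt hs.2 hbε)).2.2.2
  -- sub-lemma: μf is negative wherever the ordering holds below
  have subμ : ∀ rh : ℝ, 0 < rh → (∀ s : ℝ, 0 < s → s < rh → δf s < 0 ∧ u₁ s < u₂ s) →
      μf rh < 0 := by
    intro rh hrh hP
    by_contra hge0
    push_neg at hge0
    have hanti : StrictAntiOn μf (Ioc 0 rh) := by
      apply strictAntiOn_of_deriv_neg (convex_Ioc 0 rh) (cμ.mono Ioc_subset_Ioi_self)
      intro s hs
      rw [interior_Ioc] at hs
      rw [(hμder s hs.1).deriv]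
      obtain ⟨hδs, hus⟩ := hP s hs.1 hs.2
      have ht : 0 < s ^ ((d:ℝ)-7) := Real.rpow_pos_of_pos hs.1 _
      have h1 := hpos₁ s hs.1
      have h2 := hpos₂ s hs.1
      have h4 : 0 < 2*((d:ℝ)-4) := by linarith
      have h3 : u₁ s * u₂ s * δf s < 0 := mul_neg_of_pos_of_neg (mul_pos h1 h2) hδs
      exact mul_neg_of_pos_of_neg (mul_pos h4 ht) h3
    set b := min rh ε / 2 with hbdef
    have hminpos : 0 < min rh ε := lt_min hrh hε0
    have hb0 : 0 < b := by rw [hbdef]; positivity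
    have hbrh : b < rh := by
      rw [hbdef]
      calc min rh ε / 2 < min rh ε := half_lt_self hminpos
        _ ≤ rh := min_le_left _ _
    have hbε : b < ε := by
      rw [hbdef]
      calc min rh ε / 2 < min rh ε := half_lt_self hminpos
        _ ≤ ε := min_le_right _ _
    have hη : 0 < μf b :=
      lt_of_le_of_lt hge0 (hanti ⟨hb0, hbrh.le⟩ ⟨hrh, le_refl rh⟩ hbrh)
    refine SNH_no_bad ((d:ℝ)-5) (by linarith) ρf (fun s => Wf s / (u₂ s)^2)
      b hb0 (μf b / 4) (by linarith) 0 ?_ ?_ ?_ ?_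
    · intro s hs; exact hρder s hs.1
    · exact cρ'.mono Ioc_subset_Ioi_self
    · intro s hs
      show μf b / 4 * s ^ (-((d:ℝ)-5)) ≤ Wf s / (u₂ s)^2
      have hμs : μf b ≤ μf s := by
        rcases eq_or_lt_of_le hs.2 with h|h
        · exact le_of_eq (by rw [h])
        · exact (hanti ⟨hs.1, le_of_lt (lt_trans h hbrh)⟩ ⟨hb0, hbrh.le⟩ h).le
      have hsp : 0 < s ^ (-((d:ℝ)-5)) := Real.rpow_pos_of_pos hs.1 _
      have hu2p := hpos₂ s hs.1
      have hu2b : u₂ s ≤ 2 := (hnear s hs.1 (lt_of_le_of_lt hs.2 hbε)).2.2.1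
      have hu22 : (u₂ s)^2 ≤ 4 := by
        calc (u₂ s)^2 ≤ 2^2 := pow_le_pow_left₀ hu2p.le hu2b 2
          _ = 4 := by norm_num
      have hu220 : 0 < (u₂ s)^2 := by positivity
      have hid : Wf s = s ^ (-((d:ℝ)-5)) * μf s := by
        rw [hμf]
        dsimp only
        rw [← mul_assoc, ← Real.rpow_add hs.1,
          show -((d:ℝ)-5) + ((d:ℝ)-5) = 0 by ring, Real.rpow_zero, one_mul]
      have hdiv : μf b / 4 ≤ μf s / (u₂ s)^2 :=
        div_le_div₀ (le_trans hη.le hμs) hμs hu220 hu22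
      calc μf b / 4 * s ^ (-((d:ℝ)-5)) ≤ (μf s / (u₂ s)^2) * s ^ (-((d:ℝ)-5)) :=
            mul_le_mul_of_nonneg_right hdiv hsp.le
        _ = Wf s / (u₂ s)^2 := by rw [hid]; ring
    · intro s hs
      simp only [neg_zero, hρf]
      exact div_nonneg (hpos₁ s hs.1).le (hpos₂ s hs.1).le
  -- bootstrap: the ordering holds on all of (0, ∞)
  have HP : ∀ r : ℝ, 0 < r → δf r < 0 ∧ u₁ r < u₂ r := by
    by_contra hno
    push_neg at hno
    obtain ⟨r0, hr0pos, hr0⟩ := hno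
    set T := {t : ℝ | 0 < t ∧ (0 ≤ δf t ∨ u₂ t ≤ u₁ t)} with hT
    have hr0T : r0 ∈ T := by
      refine ⟨hr0pos, ?_⟩
      by_cases h1 : δf r0 < 0
      · exact Or.inr (hr0 h1)
      · exact Or.inl (not_lt.1 h1)
    have hTne : T.Nonempty := ⟨r0, hr0T⟩
    have hTlb : ∀ t ∈ T, ε ≤ t := by
      intro t ht
      by_contra hlt
      push_neg at hlt
      obtain ⟨h1, h2, _, _⟩ := hnear t ht.1 hlt
      rcases ht.2 with h|h
      · linarith
      · linarith
    have hbdd : BddBelow T := ⟨ε, hTlb⟩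
    set s₀ := sInf T with hs₀def
    have hεs : ε ≤ s₀ := le_csInf hTne hTlb
    have hs₀pos : 0 < s₀ := lt_of_lt_of_le hε0 hεs
    have hPlt : ∀ s : ℝ, 0 < s → s < s₀ → δf s < 0 ∧ u₁ s < u₂ s := by
      intro s hs hlt
      by_cases h1 : δf s < 0
      · by_cases h2 : u₁ s < u₂ s
        · exact ⟨h1, h2⟩
        · have hmem : s ∈ T := ⟨hs, Or.inr (not_lt.1 h2)⟩
          linarith [csInf_le hbdd hmem]
      · have hmem : s ∈ T := ⟨hs, Or.inl (not_lt.1 h1)⟩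
        linarith [csInf_le hbdd hmem]
    have hδanti : StrictAntiOn δf (Ioc 0 s₀) := by
      apply strictAntiOn_of_deriv_neg (convex_Ioc 0 s₀) (cδ.mono Ioc_subset_Ioi_self)
      intro s hs
      rw [interior_Ioc] at hs
      rw [(hδder s hs.1).deriv]
      have hg := subg s hs.1 (fun w hw hlt => hPlt w hw (lt_trans hlt hs.2))
      have hsp : 0 < s ^ ((d:ℝ)-5) := Real.rpow_pos_of_pos hs.1 _
      rw [hgf] at hg
      dsimp only at hg
      rcases mul_neg_iff.1 hg with ⟨_, h2⟩ | ⟨h1, _⟩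
      · exact h2
      · exact absurd hsp (not_lt.2 h1.le)
    have hρanti : StrictAntiOn ρf (Ioc 0 s₀) := by
      apply strictAntiOn_of_deriv_neg (convex_Ioc 0 s₀) (cρ.mono Ioc_subset_Ioi_self)
      intro s hs
      rw [interior_Ioc] at hs
      rw [(hρder s hs.1).deriv]
      have hμ := subμ s hs.1 (fun w hw hlt => hPlt w hw (lt_trans hlt hs.2))
      have hsp : 0 < s ^ ((d:ℝ)-5) := Real.rpow_pos_of_pos hs.1 _
      have hWneg : Wf s < 0 := by
        rw [hμf] at hμ
        dsimp only at hμ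
        rcases mul_neg_iff.1 hμ with ⟨_, h2⟩ | ⟨h1, _⟩
        · exact h2
        · exact absurd hsp (not_lt.2 h1.le)
      exact div_neg_of_neg_of_pos hWneg (pow_pos (hpos₂ s hs.1) 2)
    have hhalfmem : ε/2 ∈ Ioc 0 s₀ :=
      ⟨half_pos hε0, le_trans (half_lt_self hε0).le hεs⟩
    have hs₀mem : s₀ ∈ Ioc 0 s₀ := ⟨hs₀pos, le_refl _⟩
    have hhalflt : ε/2 < s₀ := lt_of_lt_of_le (half_lt_self hε0) hεs
    obtain ⟨hδh, huh, _, _⟩ := hnear (ε/2) (half_pos hε0) (half_lt_self hε0)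
    have hδs₀ : δf s₀ < 0 := lt_trans (hδanti hhalfmem hs₀mem hhalflt) hδh
    have hus₀ : u₁ s₀ < u₂ s₀ := by
      have h2 := hρanti hhalfmem hs₀mem hhalflt
      have hρh : ρf (ε/2) < 1 := by
        rw [hρf]
        exact (div_lt_one (hpos₂ _ (half_pos hε0))).2 huh
      have hlt1 : ρf s₀ < 1 := lt_trans h2 hρh
      rw [hρf] at hlt1
      exact (div_lt_one (hpos₂ s₀ hs₀pos)).1 hlt1
    have hcont1 : ContinuousAt δf s₀ := by
      have h := ((hh₂1 s₀ hs₀pos).sub (hh₁1 s₀ hs₀pos)).continuousAt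
      rw [hδf]; exact h
    have hcont2 : ContinuousAt (fun s => u₂ s - u₁ s) s₀ :=
      ((hu₂1 s₀ hs₀pos).sub (hu₁1 s₀ hs₀pos)).continuousAt
    have hev : ∀ᶠ s in nhds s₀, 0 < s ∧ δf s < 0 ∧ u₁ s < u₂ s := by
      have e1 : ∀ᶠ s in nhds s₀, δf s < 0 :=
        Filter.Tendsto.eventually_lt_const hδs₀ hcont1
      have hgt : (0:ℝ) < u₂ s₀ - u₁ s₀ := by linarith
      have e2 : ∀ᶠ s in nhds s₀, 0 < u₂ s - u₁ s :=
        Filter.Tendsto.eventually_const_lt hgt hcont2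
      have e3 : ∀ᶠ s in nhds s₀, 0 < s := eventually_gt_nhds hs₀pos
      filter_upwards [e1, e2, e3] with s hs1 hs2 hs3
      exact ⟨hs3, hs1, by linarith⟩
    obtain ⟨θ, hθ0, hθ⟩ := Metric.eventually_nhds_iff.mp hev
    have hgap : ∀ t ∈ T, s₀ + θ/2 ≤ t := by
      intro t ht
      by_contra hcl
      push_neg at hcl
      have h1 : s₀ ≤ t := csInf_le hbdd ht
      have h2 : dist t s₀ < θ := by
        rw [Real.dist_eq, abs_of_nonneg (by linarith)]
        linarith
      obtain ⟨hp0, hp1, hp2⟩ := hθ h2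
      rcases ht.2 with h|h
      · linarith
      · linarith
    have hfin := le_csInf hTne hgap
    linarith
  -- final phase: contradiction at infinity
  have hμ1 : μf 1 < 0 := subμ 1 one_pos (fun s hs _ => HP s hs)
  have hρ1pos : 0 < ρf 1 := by
    rw [hρf]; exact div_pos (hpos₁ 1 one_pos) (hpos₂ 1 one_pos)
  set I := ∫ x in Ioi (1:ℝ), (u₂ x)^2 * x^(d-5) with hIdef
  have hIRle : ∀ R : ℝ, 1 < R → ∫ x in (1:ℝ)..R, (u₂ x)^2 * x^((d:ℝ)-5) ≤ I := by
    intro R hR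
    have heq : ∫ x in (1:ℝ)..R, (u₂ x)^2 * x^((d:ℝ)-5) =
        ∫ x in Ioc (1:ℝ) R, (u₂ x)^2 * x^(d-5) := by
      rw [intervalIntegral.integral_of_le hR.le]
      apply setIntegral_congr_fun measurableSet_Ioc
      intro x hx
      have hx0 : (0:ℝ) < x := lt_trans one_pos hx.1
      have hcast : ((d - 5 : ℕ) : ℝ) = (d:ℝ) - 5 := by
        rw [Nat.cast_sub (by omega : 5 ≤ d)]; norm_num
      show (u₂ x)^2 * x^((d:ℝ)-5) = (u₂ x)^2 * x^(d-5)
      rw [← hcast, Real.rpow_natCast]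
    rw [heq, hIdef]
    apply setIntegral_mono_set hint₂
    · refine (ae_restrict_iff' measurableSet_Ioi).2 (ae_of_all _ ?_)
      intro x hx
      have hx0 : (0:ℝ) < x := lt_trans one_pos hx
      positivity
    · exact (Ioc_subset_Ioi_self).eventuallyLE
  have hI0 : 0 < I := by
    have h12 : ∫ x in (1:ℝ)..2, (u₂ x)^2 * x^((d:ℝ)-5) ≤ I := hIRle 2 one_lt_two
    have hpos : 0 < ∫ x in (1:ℝ)..2, (u₂ x)^2 * x^((d:ℝ)-5) := by
      apply intervalIntegral.intervalIntegral_pos_of_pos_on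
      · apply ContinuousOn.intervalIntegrable
        apply ContinuousOn.mono ((cu₂.pow 2).mul (crpow ((d:ℝ)-5)))
        rw [uIcc_of_le one_le_two]
        intro x hx; exact lt_of_lt_of_le one_pos hx.1
      · intro x hx
        have hx0 : (0:ℝ) < x := lt_trans one_pos hx.1
        have hu := hpos₂ x hx0
        positivity
      · exact one_lt_two
    linarith
  set R := 1 + Real.sqrt (ρf 1 * I / (-(μf 1))) + 1 with hRdef
  have hsq0 : 0 ≤ Real.sqrt (ρf 1 * I / (-(μf 1))) := Real.sqrt_nonneg _
  have hR1 : 1 < R := by rw [hRdef]; linarith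
  have hIcc : Icc (1:ℝ) R ⊆ Ioi 0 := fun x hx => lt_of_lt_of_le one_pos hx.1
  have hIccIoi : ∀ x ∈ Icc (1:ℝ) R, (0:ℝ) < x := fun x hx => lt_of_lt_of_le one_pos hx.1
  have hμmono : ∀ x ∈ Icc (1:ℝ) R, μf x ≤ μf 1 := by
    have hanti : StrictAntiOn μf (Icc 1 R) := by
      apply strictAntiOn_of_deriv_neg (convex_Icc 1 R) (cμ.mono hIcc)
      intro s hs
      rw [interior_Icc] at hs
      have hspos : 0 < s := lt_trans one_pos hs.1
      rw [(hμder s hspos).deriv]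
      obtain ⟨hδs, hus⟩ := HP s hspos
      have ht : 0 < s ^ ((d:ℝ)-7) := Real.rpow_pos_of_pos hspos _
      exact mul_neg_of_pos_of_neg (mul_pos (by linarith) ht)
        (mul_neg_of_pos_of_neg (mul_pos (hpos₁ s hspos) (hpos₂ s hspos)) hδs)
    intro x hx
    rcases eq_or_lt_of_le hx.1 with h|h
    · exact le_of_eq (by rw [← h])
    · exact (hanti (left_mem_Icc.2 hR1.le) hx h).le
  have hism : ∀ x ∈ uIcc (1:ℝ) R, x ∈ Ioi (0:ℝ) := by
    rw [uIcc_of_le hR1.le]; exact fun x hx => hIcc hx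
  have hFTC : ∫ x in (1:ℝ)..R, Wf x / (u₂ x)^2 = ρf R - ρf 1 :=
    intervalIntegral.integral_eq_sub_of_hasDerivAt
      (fun x hx => hρder x (hism x hx))
      (ContinuousOn.intervalIntegrable (cρ'.mono (fun x hx => hism x hx)))
  set J := ∫ x in (1:ℝ)..R, x^(-((d:ℝ)-5)) / (u₂ x)^2 with hJdef
  have cJ : ContinuousOn (fun x : ℝ => x^(-((d:ℝ)-5)) / (u₂ x)^2) (Ioi 0) :=
    (crpow _).div (cu₂.pow 2) (fun x hx => pow_ne_zero 2 (ne_of_gt (hpos₂ x hx)))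
  have hptw : ∀ x ∈ Icc (1:ℝ) R, Wf x / (u₂ x)^2 ≤ μf 1 * (x^(-((d:ℝ)-5)) / (u₂ x)^2) := by
    intro x hx
    have hx0 : 0 < x := hIccIoi x hx
    have hsp : 0 < x ^ (-((d:ℝ)-5)) := Real.rpow_pos_of_pos hx0 _
    have hu220 : 0 < (u₂ x)^2 := pow_pos (hpos₂ x hx0) 2
    have hid : Wf x = x ^ (-((d:ℝ)-5)) * μf x := by
      rw [hμf]
      dsimp only
      rw [← mul_assoc, ← Real.rpow_add hx0,
        show -((d:ℝ)-5) + ((d:ℝ)-5) = 0 by ring, Real.rpow_zero, one_mul]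
    have h1 : x ^ (-((d:ℝ)-5)) * μf x ≤ x ^ (-((d:ℝ)-5)) * μf 1 :=
      mul_le_mul_of_nonneg_left (hμmono x hx) hsp.le
    calc Wf x / (u₂ x)^2 = (x ^ (-((d:ℝ)-5)) * μf x) * ((u₂ x)^2)⁻¹ := by
          rw [hid]; ring
      _ ≤ (x ^ (-((d:ℝ)-5)) * μf 1) * ((u₂ x)^2)⁻¹ :=
          mul_le_mul_of_nonneg_right h1 (inv_nonneg.2 hu220.le)
      _ = μf 1 * (x^(-((d:ℝ)-5)) / (u₂ x)^2) := by ring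
  have hII1 : IntervalIntegrable (fun x => Wf x / (u₂ x)^2) volume 1 R :=
    ContinuousOn.intervalIntegrable (cρ'.mono (fun x hx => hism x hx))
  have hII2 : IntervalIntegrable (fun x => μf 1 * (x^(-((d:ℝ)-5)) / (u₂ x)^2)) volume 1 R :=
    ContinuousOn.intervalIntegrable ((continuousOn_const.mul cJ).mono (fun x hx => hism x hx))
  have hmono1 : ρf R - ρf 1 ≤ μf 1 * J := by
    rw [← hFTC, hJdef, ← intervalIntegral.integral_const_mul]
    exact intervalIntegral.integral_mono_on hR1.le hII1 hII2 hptw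
  set t := (R-1)/I with htdef
  have ht0 : 0 < t := div_pos (by linarith) hI0
  have hptw2 : ∀ x ∈ Icc (1:ℝ) R, (2:ℝ) ≤
      t * ((u₂ x)^2 * x^((d:ℝ)-5)) + t⁻¹ * (x^(-((d:ℝ)-5)) / (u₂ x)^2) := by
    intro x hx
    have hx0 : 0 < x := hIccIoi x hx
    have hu2 : 0 < u₂ x := hpos₂ x hx0
    have hXp : 0 < (u₂ x)^2 * x^((d:ℝ)-5) := by positivity
    have hxp : x^((d:ℝ)-5) * x^(-((d:ℝ)-5)) = 1 := by
      rw [← Real.rpow_add hx0, show ((d:ℝ)-5) + -((d:ℝ)-5) = 0 by ring, Real.rpow_zero]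
    have hne : ((u₂ x)^2) ≠ 0 := ne_of_gt (pow_pos hu2 2)
    have hprod : (x^(-((d:ℝ)-5)) / (u₂ x)^2) * ((u₂ x)^2 * x^((d:ℝ)-5)) = 1 := by
      have h1 : (x^(-((d:ℝ)-5)) / (u₂ x)^2) * ((u₂ x)^2 * x^((d:ℝ)-5))
          = (x^((d:ℝ)-5) * x^(-((d:ℝ)-5))) * ((u₂ x)^2 / (u₂ x)^2) := by ring
      rw [h1, hxp, div_self hne, one_mul]
    have hY : x^(-((d:ℝ)-5)) / (u₂ x)^2 = ((u₂ x)^2 * x^((d:ℝ)-5))⁻¹ :=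
      eq_inv_of_mul_eq_one_left hprod
    rw [hY, ← mul_inv]
    exact SNH_amgm _ (mul_pos ht0 hXp)
  have cI2 : ContinuousOn (fun x : ℝ => (u₂ x)^2 * x^((d:ℝ)-5)) (Ioi 0) :=
    (cu₂.pow 2).mul (crpow _)
  have hIIa : IntervalIntegrable (fun x : ℝ => t * ((u₂ x)^2 * x^((d:ℝ)-5))) volume 1 R :=
    ContinuousOn.intervalIntegrable ((continuousOn_const.mul cI2).mono (fun x hx => hism x hx))
  have hIIb : IntervalIntegrable (fun x : ℝ => t⁻¹ * (x^(-((d:ℝ)-5)) / (u₂ x)^2)) volume 1 R :=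
    ContinuousOn.intervalIntegrable ((continuousOn_const.mul cJ).mono (fun x hx => hism x hx))
  have hc2 : ∫ x in (1:ℝ)..R, (2:ℝ) = 2*(R-1) := by
    rw [intervalIntegral.integral_const, smul_eq_mul]; ring
  have hsum : 2*(R-1) ≤ t * (∫ x in (1:ℝ)..R, (u₂ x)^2 * x^((d:ℝ)-5)) + t⁻¹ * J := by
    have h := intervalIntegral.integral_mono_on hR1.le
      (intervalIntegrable_const (c := (2:ℝ))) (hIIa.add hIIb) hptw2
    rw [hc2, intervalIntegral.integral_add hIIa hIIb,
      intervalIntegral.integral_const_mul, intervalIntegral.integral_const_mul] at h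
    rw [hJdef]
    exact h
  have hJge : (R-1)^2 / I ≤ J := by
    have h2 : t * (∫ x in (1:ℝ)..R, (u₂ x)^2 * x^((d:ℝ)-5)) ≤ t * I :=
      mul_le_mul_of_nonneg_left (hIRle R hR1) ht0.le
    have ht1 : t * I = R - 1 := by rw [htdef]; field_simp
    have h3 : R - 1 ≤ t⁻¹ * J := SNH_step _ _ _ _ hsum h2 ht1
    have h4 := mul_le_mul_of_nonneg_left h3 ht0.le
    rw [← mul_assoc, mul_inv_cancel₀ (ne_of_gt ht0), one_mul] at h4
    calc (R-1)^2/I = t * (R-1) := by rw [htdef]; field_simp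
      _ ≤ J := h4
  have hρR : 0 < ρf R := by
    rw [hρf]; exact div_pos (hpos₁ R (by linarith)) (hpos₂ R (by linarith))
  have hsqb : ρf 1 * I / (-(μf 1)) ≤ (R-1)^2 := by
    have h := Real.sq_sqrt (show (0:ℝ) ≤ ρf 1 * I / (-(μf 1)) from
      div_nonneg (mul_nonneg hρ1pos.le hI0.le) (by linarith))
    nlinarith [hsq0, h]
  have hμJle : μf 1 * J ≤ μf 1 * ((R-1)^2/I) := mul_le_mul_of_nonpos_left hJge hμ1.le
  have hq : ρf 1 * I ≤ (-(μf 1)) * (R-1)^2 := by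
    calc ρf 1 * I = (ρf 1 * I / (-(μf 1))) * (-(μf 1)) :=
          (div_mul_cancel₀ _ (neg_ne_zero.2 (ne_of_lt hμ1))).symm
      _ ≤ (R-1)^2 * (-(μf 1)) := mul_le_mul_of_nonneg_right hsqb (by linarith)
      _ = (-(μf 1)) * (R-1)^2 := by ring
  have hfinal : μf 1 * ((R-1)^2/I) ≤ -(ρf 1) := by
    rw [← mul_div_assoc]
    rw [div_le_iff₀ hI0]
    nlinarith [hq]
  linarith [hmono1, hμJle, hfinal, hρR]

/-- Uniqueness of the singular ground state of the Schrödinger–Newton–Hooke system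
in supercritical dimensions `d ≥ 7`: the asymptotic parameter `c` near `r = 0` of a
positive, decaying solution of the factored-out system is unique. -/
theorem stmt15 (d : ℕ) (hd : 7 ≤ d) (lam : ℝ)
    (hlam : lam = (-(d:ℝ) + 6 + Real.sqrt ((d:ℝ)^2 + 4*(d:ℝ) - 28)) / 2)
    (u₁ u₂ h₁ h₂ : ℝ → ℝ)
    -- C² regularity on (0,∞)
    (hu₁1 : ∀ r ∈ Ioi (0:ℝ), DifferentiableAt ℝ u₁ r)
    (hu₁2 : ∀ r ∈ Ioi (0:ℝ), DifferentiableAt ℝ (deriv u₁) r)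
    (hu₁3 : ContinuousOn (deriv (deriv u₁)) (Ioi 0))
    (hh₁1 : ∀ r ∈ Ioi (0:ℝ), DifferentiableAt ℝ h₁ r)
    (hh₁2 : ∀ r ∈ Ioi (0:ℝ), DifferentiableAt ℝ (deriv h₁) r)
    (hh₁3 : ContinuousOn (deriv (deriv h₁)) (Ioi 0))
    (hu₂1 : ∀ r ∈ Ioi (0:ℝ), DifferentiableAt ℝ u₂ r)
    (hu₂2 : ∀ r ∈ Ioi (0:ℝ), DifferentiableAt ℝ (deriv u₂) r)
    (hu₂3 : ContinuousOn (deriv (deriv u₂)) (Ioi 0))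
    (hh₂1 : ∀ r ∈ Ioi (0:ℝ), DifferentiableAt ℝ h₂ r)
    (hh₂2 : ∀ r ∈ Ioi (0:ℝ), DifferentiableAt ℝ (deriv h₂) r)
    (hh₂3 : ContinuousOn (deriv (deriv h₂)) (Ioi 0))
    -- the system of equations on (0,∞)
    (hequ₁ : ∀ r : ℝ, 0 < r →
      deriv (deriv u₁) r + ((d:ℝ) - 5) / r * deriv u₁ r
        + 2 * ((d:ℝ) - 4) / r^2 * (u₁ r * h₁ r - u₁ r) - r^2 * u₁ r = 0)
    (heqh₁ : ∀ r : ℝ, 0 < r →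
      deriv (deriv h₁) r + ((d:ℝ) - 5) / r * deriv h₁ r
        + 2 * ((d:ℝ) - 4) / r^2 * ((u₁ r)^2 - h₁ r) = 0)
    (hequ₂ : ∀ r : ℝ, 0 < r →
      deriv (deriv u₂) r + ((d:ℝ) - 5) / r * deriv u₂ r
        + 2 * ((d:ℝ) - 4) / r^2 * (u₂ r * h₂ r - u₂ r) - r^2 * u₂ r = 0)
    (heqh₂ : ∀ r : ℝ, 0 < r →
      deriv (deriv h₂) r + ((d:ℝ) - 5) / r * deriv h₂ r
        + 2 * ((d:ℝ) - 4) / r^2 * ((u₂ r)^2 - h₂ r) = 0)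
    -- positivity
    (hpos₁ : ∀ r : ℝ, 0 < r → 0 < u₁ r) (hpos₂ : ∀ r : ℝ, 0 < r → 0 < u₂ r)
    -- asymptotic behaviour near r = 0
    (c₁ c₂ C₁ C₂ r₁ r₂ : ℝ) (hC₁ : 0 < C₁) (hC₂ : 0 < C₂) (hr₁ : 0 < r₁) (hr₂ : 0 < r₂)
    (hasym₁ : ∀ r : ℝ, 0 < r → r < r₁ →
      |u₁ r - 1 + c₁ * r ^ lam| ≤ C₁ * r ^ 4 ∧ |h₁ r - 1 - 2 * c₁ * r ^ lam| ≤ C₁ * r ^ 4)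
    (hasym₂ : ∀ r : ℝ, 0 < r → r < r₂ →
      |u₂ r - 1 + c₂ * r ^ lam| ≤ C₂ * r ^ 4 ∧ |h₂ r - 1 - 2 * c₂ * r ^ lam| ≤ C₂ * r ^ 4)
    -- integrability at infinity
    (hint₁ : IntegrableOn (fun r : ℝ => (u₁ r)^2 * r^(d-5)) (Ioi 1))
    (hint₂ : IntegrableOn (fun r : ℝ => (u₂ r)^2 * r^(d-5)) (Ioi 1)) :
    c₁ = c₂ := by
  refine le_antisymm ?_ ?_
  · exact SNH_key d hd lam hlam u₁ u₂ h₁ h₂ hu₁1 hu₁2 hh₁1 hh₁2 hu₂1 hu₂2 hh₂1 hh₂2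
      hequ₁ heqh₁ hequ₂ heqh₂ hpos₁ hpos₂ c₁ c₂ C₁ C₂ r₁ r₂ hC₁ hC₂ hr₁ hr₂ hasym₁ hasym₂ hint₂
  · exact SNH_key d hd lam hlam u₂ u₁ h₂ h₁ hu₂1 hu₂2 hh₂1 hh₂2 hu₁1 hu₁2 hh₁1 hh₁2
      hequ₂ heqh₂ hequ₁ heqh₁ hpos₂ hpos₁ c₂ c₁ C₂ C₁ r₂ r₁ hC₂ hC₁ hr₂ hr₁ hasym₂ hasym₁ hint₁
end

section
/- Let d ≥ 1 be an integer, ω ≥ 0, and 0 < t₀ < T ≤ ∞. Let w ∈ C²([t₀,T)) solve w″ + ((d+2)/(2t))w′ + w(w² − 1) + ((d−1)/(4t²))w + (ω/(2t))w = 0 on [t₀,T). Define E(t) = w′(t)²/2 + w(t)⁴/4 − w(t)²/2 + ((d−1)/(8t²))w(t)² + (ω/(4t))w(t)². Then E′(t) = −((d+2)/(2t))w′(t)² − ((d−1)/(4t³))w(t)² − (ω/(4t²))w(t)² ≤ 0 for all t ∈ (t₀,T), E(t) ≥ −1/4 for all t, and consequently w(t)² ≤ 1 + √(1 + 4E(t₀))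 for all t ∈ [t₀,T). -/
set_option maxHeartbeats 1000000

open Set
open scoped ENNReal

/-- The interval `[t₀, T)` (with `T` possibly infinite) as a subset of `ℝ`. -/
def SIcoT (t₀ : ℝ) (T : ℝ≥0∞) : Set ℝ := {t : ℝ | t₀ ≤ t ∧ ENNReal.ofReal t < T}

/-- One-sided derivative on `[t₀, T)`. -/
noncomputable def dT (t₀ : ℝ) (T : ℝ≥0∞) (w : ℝ → ℝ) : ℝ → ℝ :=
  derivWithin w (SIcoT t₀ T)

/-- `w` is of class `C²` on `[t₀, T)` (with one-sided derivatives at `t₀`). -/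
def C2OnT (t₀ : ℝ) (T : ℝ≥0∞) (w : ℝ → ℝ) : Prop :=
  (∀ t ∈ SIcoT t₀ T, DifferentiableWithinAt ℝ w (SIcoT t₀ T) t) ∧
  (∀ t ∈ SIcoT t₀ T, DifferentiableWithinAt ℝ (dT t₀ T w) (SIcoT t₀ T) t) ∧
  ContinuousOn (dT t₀ T (dT t₀ T w)) (SIcoT t₀ T)

/-- The mechanical energy associated with the transformed radial Gross–Pitaevskii
equation in the variables `t = r²/2`, `w = u/r`. -/
noncomputable def Efun (d : ℕ) (ω t₀ : ℝ) (T : ℝ≥0∞) (w : ℝ → ℝ) (t : ℝ) : ℝ :=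
  (dT t₀ T w t)^2 / 2 + (w t)^4 / 4 - (w t)^2 / 2
    + ((d:ℝ) - 1) / (8 * t^2) * (w t)^2 + ω / (4 * t) * (w t)^2

/-- Energy monotonicity and the resulting uniform bound for solutions of the
transformed radial Gross–Pitaevskii equation. -/
theorem stmt16 (d : ℕ) (hd : 1 ≤ d) (ω : ℝ) (hω : 0 ≤ ω)
    (t₀ : ℝ) (ht₀ : 0 < t₀) (T : ℝ≥0∞) (hT : ENNReal.ofReal t₀ < T)
    (w : ℝ → ℝ) (hw : C2OnT t₀ T w)
    (heq : ∀ t ∈ SIcoT t₀ T,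
      dT t₀ T (dT t₀ T w) t + ((d:ℝ) + 2) / (2 * t) * dT t₀ T w t
        + w t * ((w t)^2 - 1) + ((d:ℝ) - 1) / (4 * t^2) * w t
        + ω / (2 * t) * w t = 0) :
    (∀ t : ℝ, t₀ < t → ENNReal.ofReal t < T →
      HasDerivAt (Efun d ω t₀ T w)
        (-(((d:ℝ) + 2) / (2 * t)) * (dT t₀ T w t)^2
          - ((d:ℝ) - 1) / (4 * t^3) * (w t)^2 - ω / (4 * t^2) * (w t)^2) t
      ∧ (-(((d:ℝ) + 2) / (2 * t)) * (dT t₀ T w t)^2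
          - ((d:ℝ) - 1) / (4 * t^3) * (w t)^2 - ω / (4 * t^2) * (w t)^2 ≤ 0))
    ∧ (∀ t ∈ SIcoT t₀ T, -(1/4 : ℝ) ≤ Efun d ω t₀ T w t)
    ∧ (∀ t ∈ SIcoT t₀ T, (w t)^2 ≤ 1 + Real.sqrt (1 + 4 * Efun d ω t₀ T w t₀)) := by
  have hd1 : (0:ℝ) ≤ (d:ℝ) - 1 := by
    have : (1:ℝ) ≤ (d:ℝ) := by exact_mod_cast hd
    linarith
  -- membership in nhds for interior points
  have hSnhds : ∀ s : ℝ, t₀ < s → ENNReal.ofReal s < T → SIcoT t₀ T ∈ nhds s := by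
    intro s hs hsT
    rcases eq_or_ne T ⊤ with hT' | hT'
    · refine Filter.mem_of_superset (Ioi_mem_nhds hs) ?_
      intro x hx
      exact ⟨le_of_lt hx, hT' ▸ ENNReal.ofReal_lt_top⟩
    · have hsT' : s < T.toReal :=
        (ENNReal.ofReal_lt_iff_lt_toReal (le_of_lt (ht₀.trans hs)) hT').mp hsT
      refine Filter.mem_of_superset (Ioo_mem_nhds hs hsT') ?_
      intro x hx
      exact ⟨le_of_lt hx.1,
        (ENNReal.ofReal_lt_iff_lt_toReal (le_of_lt (ht₀.trans hx.1)) hT').mpr hx.2⟩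
  -- the key derivative computation
  have key : ∀ t : ℝ, t₀ < t → ENNReal.ofReal t < T →
      HasDerivAt (Efun d ω t₀ T w)
        (-(((d:ℝ) + 2) / (2 * t)) * (dT t₀ T w t)^2
          - ((d:ℝ) - 1) / (4 * t^3) * (w t)^2 - ω / (4 * t^2) * (w t)^2) t := by
    intro t ht1 ht2
    have ht0 : (0:ℝ) < t := ht₀.trans ht1
    have htS : t ∈ SIcoT t₀ T := ⟨le_of_lt ht1, ht2⟩
    have hS : SIcoT t₀ T ∈ nhds t := hSnhds t ht1 ht2
    have hwt : HasDerivAt w (dT t₀ T w t) t := by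
      have hda := (hw.1 t htS).differentiableAt hS
      have h := derivWithin_of_mem_nhds (f := w) hS
      rw [dT, h]
      exact hda.hasDerivAt
    have hgt : HasDerivAt (dT t₀ T w) (dT t₀ T (dT t₀ T w) t) t := by
      have hda := (hw.2.1 t htS).differentiableAt hS
      have h := derivWithin_of_mem_nhds (f := dT t₀ T w) hS
      rw [show dT t₀ T (dT t₀ T w) t = derivWithin (dT t₀ T w) (SIcoT t₀ T) t from rfl, h]
      exact hda.hasDerivAt
    have hne2 : (8 * t^2 : ℝ) ≠ 0 := by positivity
    have hne1 : (4 * t : ℝ) ≠ 0 := by positivity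
    have hq2 := (hasDerivAt_const t (((d:ℝ) - 1))).div
      ((hasDerivAt_pow 2 t).const_mul (8:ℝ)) hne2
    have hq1 := (hasDerivAt_const t ω).div
      ((hasDerivAt_id' t).const_mul (4:ℝ)) hne1
    have hA := (hgt.pow 2).div_const 2
    have hB := (hwt.pow 4).div_const 4
    have hC := (hwt.pow 2).div_const 2
    have hD := hq2.mul (hwt.pow 2)
    have hE := hq1.mul (hwt.pow 2)
    have H := (((hA.add hB).sub hC).add hD).add hE
    have hw2eq : dT t₀ T (dT t₀ T w) t
        = -(((d:ℝ) + 2) / (2 * t) * dT t₀ T w t) - w t * ((w t)^2 - 1)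
          - ((d:ℝ) - 1) / (4 * t^2) * w t - ω / (2 * t) * w t := by
      have := heq t htS
      linarith
    have hval : (-(((d:ℝ) + 2) / (2 * t)) * (dT t₀ T w t)^2
          - ((d:ℝ) - 1) / (4 * t^3) * (w t)^2 - ω / (4 * t^2) * (w t)^2)
        = (↑2 * dT t₀ T w t ^ (2 - 1) * dT t₀ T (dT t₀ T w) t / 2
            + ↑4 * w t ^ (4 - 1) * dT t₀ T w t / 4
            - ↑2 * w t ^ (2 - 1) * dT t₀ T w t / 2
          + ((0 * (8 * t ^ 2) - ((d:ℝ) - 1) * (8 * (↑2 * t ^ (2 - 1)))) / (8 * t ^ 2) ^ 2 * w t ^ 2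
            + ((d:ℝ) - 1) / (8 * t ^ 2) * (↑2 * w t ^ (2 - 1) * dT t₀ T w t))
          + ((0 * (4 * t) - ω * (4 * 1)) / (4 * t) ^ 2 * w t ^ 2
            + ω / (4 * t) * (↑2 * w t ^ (2 - 1) * dT t₀ T w t))) := by
      rw [hw2eq]
      norm_num
      field_simp
      ring
    rw [hval]
    exact H
  refine ⟨?_, ?_, ?_⟩
  · intro t ht1 ht2
    refine ⟨key t ht1 ht2, ?_⟩
    have ht0 : (0:ℝ) < t := ht₀.trans ht1
    have hA : 0 ≤ ((d:ℝ) + 2) / (2 * t) * (dT t₀ T w t)^2 := by positivity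
    have hB : 0 ≤ ((d:ℝ) - 1) / (4 * t^3) * (w t)^2 := by
      apply mul_nonneg (div_nonneg hd1 (by positivity)) (sq_nonneg _)
    have hC : 0 ≤ ω / (4 * t^2) * (w t)^2 := by positivity
    linarith
  · intro t htS
    have ht0 : (0:ℝ) < t := lt_of_lt_of_le ht₀ htS.1
    have hB : 0 ≤ ((d:ℝ) - 1) / (8 * t^2) * (w t)^2 := by
      apply mul_nonneg (div_nonneg hd1 (by positivity)) (sq_nonneg _)
    have hC : 0 ≤ ω / (4 * t) * (w t)^2 := by positivity
    have hq : 0 ≤ ((w t)^2 - 1)^2 := sq_nonneg _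
    have hg : 0 ≤ (dT t₀ T w t)^2 := sq_nonneg _
    unfold Efun
    nlinarith
  · -- part 3
    have hE0 : -(1/4 : ℝ) ≤ Efun d ω t₀ T w t₀ := by
      -- reuse part 2 argument at t₀
      have hB : 0 ≤ ((d:ℝ) - 1) / (8 * t₀^2) * (w t₀)^2 := by
        apply mul_nonneg (div_nonneg hd1 (by positivity)) (sq_nonneg _)
      have hC : 0 ≤ ω / (4 * t₀) * (w t₀)^2 := by positivity
      have hq : 0 ≤ ((w t₀)^2 - 1)^2 := sq_nonneg _
      have hg : 0 ≤ (dT t₀ T w t₀)^2 := sq_nonneg _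
      unfold Efun
      nlinarith
    have hwc : ContinuousOn w (SIcoT t₀ T) := fun s hs => (hw.1 s hs).continuousWithinAt
    have hgc : ContinuousOn (dT t₀ T w) (SIcoT t₀ T) :=
      fun s hs => (hw.2.1 s hs).continuousWithinAt
    have hcont : ContinuousOn (Efun d ω t₀ T w) (SIcoT t₀ T) := by
      unfold Efun
      have h2 : ContinuousOn (fun s : ℝ => ((d:ℝ) - 1) / (8 * s^2)) (SIcoT t₀ T) := by
        refine continuousOn_const.div (Continuous.continuousOn (by continuity)) ?_
        intro s hs
        have : (0:ℝ) < s := lt_of_lt_of_le ht₀ hs.1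
        positivity
      have h1 : ContinuousOn (fun s : ℝ => ω / (4 * s)) (SIcoT t₀ T) := by
        refine continuousOn_const.div (Continuous.continuousOn (by continuity)) ?_
        intro s hs
        have : (0:ℝ) < s := lt_of_lt_of_le ht₀ hs.1
        positivity
      exact (((((hgc.pow 2).div_const 2).add ((hwc.pow 4).div_const 4)).sub
        ((hwc.pow 2).div_const 2)).add (h2.mul (hwc.pow 2))).add (h1.mul (hwc.pow 2))
    intro t htS
    have ht0 : (0:ℝ) < t := lt_of_lt_of_le ht₀ htS.1
    have hsub : Icc t₀ t ⊆ SIcoT t₀ T := fun s hs =>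
      ⟨hs.1, lt_of_le_of_lt (ENNReal.ofReal_le_ofReal hs.2) htS.2⟩
    have hanti : AntitoneOn (Efun d ω t₀ T w) (Icc t₀ t) := by
      apply antitoneOn_of_deriv_nonpos (convex_Icc _ _) (hcont.mono hsub)
      · intro s hs
        rw [interior_Icc] at hs
        have hsT : ENNReal.ofReal s < T :=
          lt_of_le_of_lt (ENNReal.ofReal_le_ofReal (le_of_lt hs.2)) htS.2
        exact ((key s hs.1 hsT).differentiableAt).differentiableWithinAt
      · intro s hs
        rw [interior_Icc] at hs
        have hsT : ENNReal.ofReal s < T :=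
          lt_of_le_of_lt (ENNReal.ofReal_le_ofReal (le_of_lt hs.2)) htS.2
        have hs0 : (0:ℝ) < s := ht₀.trans hs.1
        rw [(key s hs.1 hsT).deriv]
        have hA : 0 ≤ ((d:ℝ) + 2) / (2 * s) * (dT t₀ T w s)^2 := by positivity
        have hB : 0 ≤ ((d:ℝ) - 1) / (4 * s^3) * (w s)^2 := by
          apply mul_nonneg (div_nonneg hd1 (by positivity)) (sq_nonneg _)
        have hC : 0 ≤ ω / (4 * s^2) * (w s)^2 := by positivity
        linarith only [hA, hB, hC]
    have hEle : Efun d ω t₀ T w t ≤ Efun d ω t₀ T w t₀ :=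
      hanti (left_mem_Icc.mpr htS.1) (right_mem_Icc.mpr htS.1) htS.1
    -- algebra
    have hB : 0 ≤ ((d:ℝ) - 1) / (8 * t^2) * (w t)^2 := by
      apply mul_nonneg (div_nonneg hd1 (by positivity)) (sq_nonneg _)
    have hC : 0 ≤ ω / (4 * t) * (w t)^2 := by positivity
    have hg : 0 ≤ (dT t₀ T w t)^2 := sq_nonneg _
    have hkey : ((w t)^2 - 1)^2 ≤ 1 + 4 * Efun d ω t₀ T w t₀ := by
      have hEt : (w t)^4 / 4 - (w t)^2 / 2 ≤ Efun d ω t₀ T w t := by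
        unfold Efun; nlinarith
      nlinarith
    have hstep : (w t)^2 - 1 ≤ Real.sqrt (1 + 4 * Efun d ω t₀ T w t₀) := by
      calc (w t)^2 - 1 ≤ |(w t)^2 - 1| := le_abs_self _
        _ = Real.sqrt (((w t)^2 - 1)^2) := (Real.sqrt_sq_eq_abs _).symm
        _ ≤ Real.sqrt (1 + 4 * Efun d ω t₀ T w t₀) := Real.sqrt_le_sqrt hkey
    linarith
end
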